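/- (General Barnett decomposition formula) Let f = a_0 x^d + ... + a_d ∈ ℚ[x] with d ≥ 1 and a_0 ≠ 0, let X be the companion matrix of f, and let g ∈ ℚ[x] with deg g ≤ d. Then g(X)·B(1) = B(g); equivalently, since B(1) is invertible, g(X) = B(g)·B(1)^{-1}, where g(X) denotes the evaluation of g at the matrix X. -/

import Mathlib

/-!
The companion matrix of a monic `p` of degree `n`, acting on coefficient vectors of polynomials of
degree `< n`, is multiplication by `x` modulo `p`; hence `g(X)` is multiplication by `g` modulo `p`.
The `j`-th column of `B(g)` is the coefficient `δ_j(g)` of `y^j` in `δ(g)`, a polynomial in `x` of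
degree `< d` (bound the `y`-degree, then use that `δ(g)` is symmetric in `x` and `y`). Since
`(x - y) (g(x) δ(1) - δ(g)) = f(x) (g(x) - g(y))` and `x - y` divides `g(x) - g(y)`, every
`g δ_j(1) - δ_j(g)` is a multiple of `f`, which is `g(X) B(1) = B(g)` read column by column.
Finally `B(1)` is the Hankel matrix `(f_{i+j+1})`, upper triangular after reversing its columns,
with `a_0` on the diagonal, so it is invertible.
-/

open Polynomial Matrix

namespace Polynomial

variable {R : Type*} [CommRing R]

section Companion

variable {p : R[X]} {n : ℕ}

def companion (p : R[X]) (n : ℕ) : Matrix (Fin n) (Fin n) R :=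
  of fun i j => if (j : ℕ) = n - 1 then -p.coeff i else if (i : ℕ) = j + 1 then 1 else 0

theorem X_mul_modByMonic_of_degree_lt (hp : p.Monic) (hn : p.natDegree = n) {r : R[X]}
    (hr : r.degree < n) : (X * r) %ₘ p = X * r - C (r.coeff (n - 1)) * p := by
  nontriviality R
  rw [modByMonic_eq_of_dvd_sub (p₂ := X * r - C (r.coeff (n - 1)) * p) hp
      (by rw [sub_sub_cancel]; exact dvd_mul_left p _),
    modByMonic_eq_self_iff hp, degree_eq_natDegree hp.ne_zero, hn, degree_lt_iff_coeff_zero]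
  intro m hm
  have hr' : ∀ k, n ≤ k → r.coeff k = 0 := fun k hk =>
    coeff_eq_zero_of_degree_lt (hr.trans_le (by exact_mod_cast hk))
  rw [coeff_sub, coeff_C_mul]
  rcases hm.eq_or_lt with rfl | hlt
  · rw [← hn, hp.coeff_natDegree, hn, mul_one]
    rcases n with _ | k
    · simp [hr' 0 le_rfl]
    · simp [coeff_X_mul]
  · obtain ⟨k, rfl⟩ : ∃ k, m = k + 1 := ⟨m - 1, by omega⟩
    rw [coeff_X_mul, hr' k (by omega), coeff_eq_zero_of_natDegree_lt (p := p) (by omega),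
      mul_zero, sub_zero]

theorem companion_mulVec (hp : p.Monic) (hn : p.natDegree = n) {r : R[X]} (hr : r.degree < n) :
    companion p n *ᵥ (fun i : Fin n => r.coeff i) =
      fun i : Fin n => ((X * r) %ₘ p).coeff i := by
  ext ⟨i, hi⟩
  rw [X_mul_modByMonic_of_degree_lt hp hn hr, coeff_sub, coeff_C_mul]
  simp only [mulVec, dotProduct, companion, of_apply]
  rw [Fin.sum_univ_eq_sum_range
    (fun j => (if j = n - 1 then -p.coeff i else if i = j + 1 then 1 else 0) * r.coeff j)]
  have hentry : ∀ j ∈ Finset.range n,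
      (if j = n - 1 then -p.coeff i else if i = j + 1 then 1 else 0) * r.coeff j =
        (if j = n - 1 then -p.coeff i * r.coeff (n - 1) else 0) +
          (if j = i - 1 ∧ 0 < i then r.coeff (i - 1) else 0) := by
    intro j hj
    rw [Finset.mem_range] at hj
    by_cases h1 : j = n - 1 <;> by_cases h2 : i = j + 1 <;> simp [h1, h2] <;> omega
  rw [Finset.sum_congr rfl hentry, Finset.sum_add_distrib, Finset.sum_ite_eq']
  rcases i with _ | k
  · simp [hi]
    ring
  · simp [coeff_X_mul, show k < n by omega, show 0 < n by omega]
    ring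

theorem companion_mulVec_modByMonic (hp : p.Monic) (hn : p.natDegree = n) (q : R[X]) :
    companion p n *ᵥ (fun i : Fin n => (q %ₘ p).coeff i) =
      fun i : Fin n => ((X * q) %ₘ p).coeff i := by
  nontriviality R
  have hq : (q %ₘ p).degree < n := by
    simpa [degree_eq_natDegree hp.ne_zero, hn] using degree_modByMonic_lt q hp
  rw [companion_mulVec hp hn hq,
    modByMonic_eq_of_dvd_sub hp (by rw [← mul_sub]; exact (dvd_modByMonic_sub q p).mul_left X)]

theorem aeval_companion_mulVec_modByMonic (hp : p.Monic) (hn : p.natDegree = n) (g q : R[X]) :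
    aeval (companion p n) g *ᵥ (fun i : Fin n => (q %ₘ p).coeff i) =
      fun i : Fin n => ((g * q) %ₘ p).coeff i := by
  induction g using Polynomial.induction_on generalizing q with
  | C a =>
    rw [aeval_C, Algebra.algebraMap_eq_smul_one, smul_mulVec, one_mulVec, ← smul_eq_C_mul,
      smul_modByMonic]
    rfl
  | add g₁ g₂ h₁ h₂ =>
    ext i
    simp [add_mulVec, h₁, h₂, add_mul, add_modByMonic]
  | monomial k a ih =>
    rw [pow_succ, ← mul_assoc, map_mul, aeval_X, ← mulVec_mulVec,
      companion_mulVec_modByMonic hp hn, ih, mul_assoc _ X q]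

end Companion

/-- `x` goes to the inner variable and `y` to the outer one, so the coefficient of `Y ^ j` in
`toPolyPoly δ` is the `j`-th column of the Bezout matrix. -/
noncomputable def toPolyPoly : MvPolynomial (Fin 2) R →ₐ[R] R[X][X] :=
  MvPolynomial.aeval ![C X, X]

theorem coeff_coeff_toPolyPoly (p : MvPolynomial (Fin 2) R) (i j : ℕ) :
    ((toPolyPoly p).coeff j).coeff i = p.coeff (Finsupp.single 0 i + Finsupp.single 1 j) := by
  induction p using MvPolynomial.induction_on' with
  | add p q hp hq => simp [hp, hq]
  | monomial u c =>
    have hu : u = Finsupp.single 0 i + Finsupp.single 1 j ↔ j = u 1 ∧ i = u 0 := by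
      constructor
      · rintro rfl
        simp
      · rintro ⟨rfl, rfl⟩
        ext k
        fin_cases k <;> simp
    have hmon : toPolyPoly (MvPolynomial.monomial u c) = C (C c * X ^ u 0) * X ^ u 1 := by
      rw [toPolyPoly, MvPolynomial.aeval_monomial, Finsupp.prod_fintype _ _ fun _ => pow_zero _,
        Fin.prod_univ_two]
      simp [mul_assoc]
    rw [hmon, coeff_C_mul_X_pow, apply_ite (coeff · i), coeff_C_mul_X_pow, coeff_zero,
      MvPolynomial.coeff_monomial]
    simp only [hu, ite_and]

@[simp]
theorem toPolyPoly_X_zero : toPolyPoly (MvPolynomial.X 0 : MvPolynomial (Fin 2) R) = C X := by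
  simp [toPolyPoly]

@[simp]
theorem toPolyPoly_X_one : toPolyPoly (MvPolynomial.X 1 : MvPolynomial (Fin 2) R) = X := by
  simp [toPolyPoly]

theorem toPolyPoly_aeval_X_zero (f : R[X]) :
    toPolyPoly (aeval (MvPolynomial.X 0 : MvPolynomial (Fin 2) R) f) = C f := by
  rw [← aeval_algHom_apply, toPolyPoly_X_zero]
  simpa using aeval_algHom_apply (CAlgHom (R := R) (A := R[X])) X f

theorem toPolyPoly_aeval_X_one (f : R[X]) :
    toPolyPoly (aeval (MvPolynomial.X 1 : MvPolynomial (Fin 2) R) f) = f.map C := by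
  rw [← aeval_algHom_apply, toPolyPoly_X_one, aeval_X_left_eq_map, algebraMap_eq]

theorem coeff_eq_zero_of_C_sub_X_mul_eq {S : Type*} [CommRing S] {a : S} {D E : S[X]}
    {n j : ℕ} (h : (C a - X) * D = E) (hE : E.natDegree ≤ n) (hj : n ≤ j) :
    D.coeff j = 0 := by
  nontriviality S
  rcases eq_or_ne D 0 with rfl | hD
  · rfl
  have hdeg := (monic_X_sub_C a).natDegree_mul' hD
  rw [show (X - C a) * D = -E by rw [← h]; ring, natDegree_neg, natDegree_X_sub_C] at hdeg
  exact coeff_eq_zero_of_natDegree_lt (by omega)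

def IsBezoutian (f g : R[X]) (δ : MvPolynomial (Fin 2) R) : Prop :=
  (MvPolynomial.X 0 - MvPolynomial.X 1) * δ =
    aeval (MvPolynomial.X 0) f * aeval (MvPolynomial.X 1) g -
      aeval (MvPolynomial.X 1) f * aeval (MvPolynomial.X 0) g

noncomputable def bezoutMatrix (n : ℕ) (δ : MvPolynomial (Fin 2) R) :
    Matrix (Fin n) (Fin n) R :=
  of fun i j => δ.coeff (Finsupp.single 0 (i : ℕ) + Finsupp.single 1 (j : ℕ))

theorem bezoutMatrix_apply (n : ℕ) (δ : MvPolynomial (Fin 2) R) (i j : Fin n) :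
    bezoutMatrix n δ i j = ((toPolyPoly δ).coeff j).coeff i := by
  rw [bezoutMatrix, of_apply, coeff_coeff_toPolyPoly]

namespace IsBezoutian

variable {f g : R[X]} {δ : MvPolynomial (Fin 2) R}

theorem toPolyPoly_eq (h : IsBezoutian f g δ) :
    (C X - X) * toPolyPoly δ = C f * g.map C - f.map C * C g := by
  simpa only [map_mul, map_sub, toPolyPoly_aeval_X_zero, toPolyPoly_aeval_X_one,
    toPolyPoly_X_zero, toPolyPoly_X_one] using congrArg toPolyPoly h

/-- Both sides of the defining identity change sign when `x` and `y` are swapped. -/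
theorem rename_swap [IsDomain R] (h : IsBezoutian f g δ) :
    MvPolynomial.rename (Equiv.swap 0 1) δ = δ := by
  have hX : (MvPolynomial.X 0 - MvPolynomial.X 1 : MvPolynomial (Fin 2) R) ≠ 0 :=
    sub_ne_zero.mpr fun h => absurd (MvPolynomial.X_injective h) (by decide)
  rw [IsBezoutian] at h
  apply mul_left_cancel₀ hX
  have hswap := congrArg (MvPolynomial.rename (Equiv.swap (0 : Fin 2) 1)) h
  simp [← aeval_algHom_apply] at hswap
  linear_combination -hswap - h

theorem coeff_comm [IsDomain R] (h : IsBezoutian f g δ) (i j : ℕ) :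
    δ.coeff (Finsupp.single 0 i + Finsupp.single 1 j) =
      δ.coeff (Finsupp.single 0 j + Finsupp.single 1 i) := by
  rw [← MvPolynomial.coeff_rename_mapDomain (Equiv.swap (0 : Fin 2) 1) (Equiv.injective _),
    h.rename_swap]
  simp [Finsupp.mapDomain_add, add_comm]

theorem coeff_toPolyPoly_eq_zero (h : IsBezoutian f g δ) {n j : ℕ} (hf : f.natDegree ≤ n)
    (hg : g.natDegree ≤ n) (hj : n ≤ j) : (toPolyPoly δ).coeff j = 0 := by
  refine coeff_eq_zero_of_C_sub_X_mul_eq h.toPolyPoly_eq ?_ hj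
  refine (natDegree_sub_le _ _).trans (max_le ?_ ?_)
  · exact (natDegree_C_mul_le _ _).trans (natDegree_map_le.trans hg)
  · exact (natDegree_mul_C_le _ _).trans (natDegree_map_le.trans hf)

theorem degree_coeff_toPolyPoly_lt [IsDomain R] (h : IsBezoutian f g δ) {n : ℕ}
    (hf : f.natDegree ≤ n) (hg : g.natDegree ≤ n) (j : ℕ) :
    ((toPolyPoly δ).coeff j).degree < n := by
  rw [degree_lt_iff_coeff_zero]
  intro i hi
  rw [coeff_coeff_toPolyPoly, h.coeff_comm, ← coeff_coeff_toPolyPoly,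
    h.coeff_toPolyPoly_eq_zero hf hg hi, coeff_zero]

theorem coeff_of_one (h : IsBezoutian f 1 δ) (i j : ℕ) :
    δ.coeff (Finsupp.single 0 i + Finsupp.single 1 j) = f.coeff (i + j + 1) := by
  have hD := h.toPolyPoly_eq
  rw [Polynomial.map_one, C_1, mul_one, mul_one] at hD
  -- comparing coefficients of `x ^ (i + 1) * y ^ k` in `(x - y) δ = f(x) - f(y)` moves
  -- `δ_{i,k}` to `δ_{i+1,k-1}`, down to `δ_{i+k,0} = f_{i+k+1}`
  have hcoeff (k i : ℕ) := congrArg (fun P : R[X][X] => (P.coeff k).coeff (i + 1)) hD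
  rw [← coeff_coeff_toPolyPoly]
  induction j generalizing i with
  | zero => simpa [sub_mul, coeff_C_mul, coeff_X_mul, coeff_C] using hcoeff 0 i
  | succ j ih =>
    have hrec := hcoeff (j + 1) i
    simp [sub_mul, coeff_C_mul, coeff_X_mul, ih, sub_eq_zero] at hrec
    rw [hrec]
    ring_nf

theorem dvd_sub_coeff_toPolyPoly [IsDomain R] {δ₁ : MvPolynomial (Fin 2) R}
    (h₁ : IsBezoutian f 1 δ₁) (h : IsBezoutian f g δ) (j : ℕ) :
    f ∣ g * (toPolyPoly δ₁).coeff j - (toPolyPoly δ).coeff j := by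
  obtain ⟨H, hH⟩ : X - C X ∣ g.map C - C g := by
    simpa [eval_map] using X_sub_C_dvd_sub_C_eval (a := X) (p := g.map C)
  have hne : (C X - X : R[X][X]) ≠ 0 := by
    rw [← neg_sub]
    exact neg_ne_zero.mpr (X_sub_C_ne_zero X)
  have key : C g * toPolyPoly δ₁ - toPolyPoly δ = C f * H := by
    apply mul_left_cancel₀ hne
    have e₁ := h₁.toPolyPoly_eq
    rw [Polynomial.map_one, C_1, mul_one, mul_one] at e₁
    linear_combination C g * e₁ - h.toPolyPoly_eq - C f * hH
  exact ⟨H.coeff j, by simpa [coeff_C_mul] using congrArg (coeff · j) key⟩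

end IsBezoutian

theorem aeval_companion_mul_bezoutMatrix [IsDomain R] {p f g : R[X]} {n : ℕ}
    {δ₁ δ : MvPolynomial (Fin 2) R} (hp : p.Monic) (hn : p.natDegree = n) (hpf : p ∣ f)
    (hf : f.natDegree ≤ n) (hg : g.natDegree ≤ n) (h₁ : IsBezoutian f 1 δ₁)
    (h : IsBezoutian f g δ) :
    aeval (companion p n) g * bezoutMatrix n δ₁ = bezoutMatrix n δ := by
  nontriviality R
  have hpn : p.degree = n := by rw [degree_eq_natDegree hp.ne_zero, hn]
  ext i j
  have hcol₁ : (toPolyPoly δ₁).coeff j %ₘ p = (toPolyPoly δ₁).coeff j :=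
    (modByMonic_eq_self_iff hp).mpr (hpn ▸ h₁.degree_coeff_toPolyPoly_lt hf (by simp) j)
  have hcol : (g * (toPolyPoly δ₁).coeff j) %ₘ p = (toPolyPoly δ).coeff j := by
    rw [modByMonic_eq_of_dvd_sub hp (hpf.trans (h₁.dvd_sub_coeff_toPolyPoly h j)),
      (modByMonic_eq_self_iff hp).mpr (hpn ▸ h.degree_coeff_toPolyPoly_lt hf hg j)]
  calc (aeval (companion p n) g * bezoutMatrix n δ₁) i j
      = (aeval (companion p n) g *ᵥ
          fun k : Fin n => ((toPolyPoly δ₁).coeff j %ₘ p).coeff k) i := by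
        rw [hcol₁]
        simp [mul_apply, mulVec, dotProduct, bezoutMatrix_apply]
    _ = bezoutMatrix n δ i j := by
        rw [aeval_companion_mulVec_modByMonic hp hn, hcol, bezoutMatrix_apply]

noncomputable def hankel (p : R[X]) (n : ℕ) : Matrix (Fin n) (Fin n) R :=
  of fun i j => p.coeff (i + j + 1)

theorem isUnit_det_hankel {p : R[X]} {n : ℕ} (hn : p.natDegree = n)
    (hp : IsUnit p.leadingCoeff) : IsUnit (hankel p n).det := by
  have htri : ((hankel p n).submatrix id Fin.revPerm).IsUpperTriangular := by
    intro i j hij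
    have : n < i + (n - (j + 1)) + 1 := by
      have := i.is_lt
      have : (j : ℕ) < i := hij
      omega
    simp only [hankel, submatrix_apply, id_eq, of_apply, Fin.revPerm_apply, Fin.val_rev]
    exact coeff_eq_zero_of_natDegree_lt (by omega)
  have hdiag (i : Fin n) : (hankel p n).submatrix id Fin.revPerm i i = p.leadingCoeff := by
    have : (i : ℕ) + (n - (i + 1)) + 1 = n := by
      have := i.is_lt
      omega
    simp [hankel, Fin.val_rev, this, leadingCoeff, hn]
  have hdet := det_permute' Fin.revPerm (hankel p n)
  rw [det_of_isUpperTriangular htri] at hdet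
  simp only [hdiag, Finset.prod_const, Finset.card_univ, Fintype.card_fin] at hdet
  exact isUnit_of_mul_isUnit_right (hdet ▸ hp.pow n)

theorem IsBezoutian.bezoutMatrix_eq_hankel {f : R[X]} {δ : MvPolynomial (Fin 2) R}
    (h : IsBezoutian f 1 δ) (n : ℕ) : bezoutMatrix n δ = hankel f n := by
  ext i j
  simp [bezoutMatrix, hankel, h.coeff_of_one]

theorem coeff_sum_range_C_mul_X_pow_sub (a : ℕ → R) (d m : ℕ) :
    (∑ k ∈ Finset.range (d + 1), C (a k) * X ^ (d - k)).coeff m =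
      if m ≤ d then a (d - m) else 0 := by
  simp only [finsetSum_coeff, coeff_C_mul_X_pow]
  split_ifs with hm
  · rw [Finset.sum_eq_single_of_mem (d - m) (Finset.mem_range.mpr (by omega))
      (fun k hk _ => if_neg (by rw [Finset.mem_range] at hk; omega)), if_pos (by omega)]
  · exact Finset.sum_eq_zero fun k _ => if_neg (by omega)

end Polynomial

theorem stmt_10_general (d : ℕ) (a : ℕ → ℚ) (ha : a 0 ≠ 0)
    (f : Polynomial ℚ)
    (hf : f = ∑ k ∈ Finset.range (d + 1), C (a k) * Polynomial.X ^ (d - k))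
    (X : Matrix (Fin d) (Fin d) ℚ)
    (hX : ∀ i j : Fin d, X i j =
      if (j : ℕ) = d - 1 then -a (d - (i : ℕ)) / a 0
      else if (i : ℕ) = (j : ℕ) + 1 then 1 else 0)
    (g : Polynomial ℚ) (hg : g.natDegree ≤ d)
    (δ1 δg : MvPolynomial (Fin 2) ℚ)
    (hδ1 : (MvPolynomial.X 0 - MvPolynomial.X 1) * δ1 =
      Polynomial.aeval (MvPolynomial.X 0) f - Polynomial.aeval (MvPolynomial.X 1) f)
    (hδg : (MvPolynomial.X 0 - MvPolynomial.X 1) * δg =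
      Polynomial.aeval (MvPolynomial.X 0) f * Polynomial.aeval (MvPolynomial.X 1) g
        - Polynomial.aeval (MvPolynomial.X 1) f * Polynomial.aeval (MvPolynomial.X 0) g)
    (B1 Bg : Matrix (Fin d) (Fin d) ℚ)
    (hB1 : ∀ i j : Fin d, B1 i j =
      MvPolynomial.coeff (Finsupp.single 0 (i : ℕ) + Finsupp.single 1 (j : ℕ)) δ1)
    (hBg : ∀ i j : Fin d, Bg i j =
      MvPolynomial.coeff (Finsupp.single 0 (i : ℕ) + Finsupp.single 1 (j : ℕ)) δg) :
    Polynomial.aeval X g * B1 = Bg ∧ Polynomial.aeval X g = Bg * B1⁻¹ := by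
  have hfc : ∀ m, f.coeff m = if m ≤ d then a (d - m) else 0 :=
    hf ▸ coeff_sum_range_C_mul_X_pow_sub a d
  have hfd : f.natDegree = d :=
    natDegree_eq_of_le_of_coeff_ne_zero
      (natDegree_le_iff_coeff_eq_zero.mpr fun m hm => by rw [hfc, if_neg (by omega)])
      (by rwa [hfc, if_pos le_rfl, Nat.sub_self])
  have hlc : f.leadingCoeff = a 0 := by rw [leadingCoeff, hfd, hfc, if_pos le_rfl, Nat.sub_self]
  set p := f * C (a 0)⁻¹ with hp_def
  have hp : p.Monic := by
    rw [hp_def, ← hlc]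
    exact monic_mul_leadingCoeff_inv fun h0 => ha (by rw [← hlc, h0, leadingCoeff_zero])
  have hpd : p.natDegree = d := by rw [natDegree_mul_C (inv_ne_zero ha), hfd]
  have hpf : p ∣ f :=
    ⟨C (a 0), by rw [mul_assoc, ← C_mul, inv_mul_cancel₀ ha, C_1, mul_one]⟩
  have hXp : X = companion p d := by
    ext i j
    rw [hX, companion, of_apply, coeff_mul_C, hfc, if_pos i.is_lt.le, neg_div, div_eq_mul_inv]
  have h₁ : IsBezoutian f 1 δ1 := by simpa [IsBezoutian] using hδ1
  have hB1d : B1 = bezoutMatrix d δ1 := Matrix.ext hB1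
  have barnett : aeval X g * B1 = Bg := by
    rw [hXp, hB1d, show Bg = bezoutMatrix d δg from Matrix.ext hBg]
    exact aeval_companion_mul_bezoutMatrix hp hpd hpf hfd.le hg h₁ hδg
  have hB1 : IsUnit B1.det := by
    rw [hB1d, h₁.bezoutMatrix_eq_hankel]
    exact isUnit_det_hankel hfd (hlc ▸ ha.isUnit)
  refine ⟨barnett, ?_⟩
  rw [← barnett, Matrix.mul_assoc, mul_nonsing_inv _ hB1, Matrix.mul_one]

/-- General Barnett decomposition formula: for `g` with `deg g ≤ d`,
`g(X)·B(1) = B(g)`, equivalently `g(X) = B(g)·B(1)⁻¹`. -/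
theorem stmt_10 (d : ℕ) (hd : 1 ≤ d) (a : ℕ → ℚ) (ha : a 0 ≠ 0)
    (f : Polynomial ℚ)
    (hf : f = ∑ k ∈ Finset.range (d + 1), C (a k) * Polynomial.X ^ (d - k))
    (X : Matrix (Fin d) (Fin d) ℚ)
    (hX : ∀ i j : Fin d, X i j =
      if (j : ℕ) = d - 1 then -a (d - (i : ℕ)) / a 0
      else if (i : ℕ) = (j : ℕ) + 1 then 1 else 0)
    (g : Polynomial ℚ) (hg : g.natDegree ≤ d)
    (δ1 δg : MvPolynomial (Fin 2) ℚ)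
    (hδ1 : (MvPolynomial.X 0 - MvPolynomial.X 1) * δ1 =
      Polynomial.aeval (MvPolynomial.X 0) f - Polynomial.aeval (MvPolynomial.X 1) f)
    (hδg : (MvPolynomial.X 0 - MvPolynomial.X 1) * δg =
      Polynomial.aeval (MvPolynomial.X 0) f * Polynomial.aeval (MvPolynomial.X 1) g
        - Polynomial.aeval (MvPolynomial.X 1) f * Polynomial.aeval (MvPolynomial.X 0) g)
    (B1 Bg : Matrix (Fin d) (Fin d) ℚ)
    (hB1 : ∀ i j : Fin d, B1 i j =
      MvPolynomial.coeff (Finsupp.single 0 (i : ℕ) + Finsupp.single 1 (j : ℕ)) δ1)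
    (hBg : ∀ i j : Fin d, Bg i j =
      MvPolynomial.coeff (Finsupp.single 0 (i : ℕ) + Finsupp.single 1 (j : ℕ)) δg) :
    Polynomial.aeval X g * B1 = Bg ∧ Polynomial.aeval X g = Bg * B1⁻¹ :=
  stmt_10_general d a ha f hf X hX g hg δ1 δg hδ1 hδg B1 Bg hB1 hBg
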